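/- (Saalschütz's theorem.) Let n be a natural number and a, b, c ∈ ℂ such that (c)_k ≠ 0 and (1+a+b−c−n)_k ≠ 0 for all 0 ≤ k ≤ n, and (c)_n ≠ 0, (c−a−b)_n ≠ 0. Then ∑_{k=0}^{n} ((a)_k · (b)_k · (−n)_k)/((c)_k · (1+a+b−c−n)_k · k!) = ((c−a)_n · (c−b)_n)/((c)_n · (c−a−b)_n). -/

import Mathlib

/-- Pochhammer symbol (shifted factorial) of a complex number. -/
noncomputable def poch (a : ℂ) (k : ℕ) : ℂ := ∏ j ∈ Finset.range k, (a + j)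

open Finset

lemma poch_zero (a : ℂ) : poch a 0 = 1 := by simp [poch]
lemma poch_succ (a : ℂ) (k : ℕ) : poch a (k+1) = poch a k * (a + k) := by
  simp [poch, Finset.prod_range_succ]
lemma poch_add (a : ℂ) (m l : ℕ) : poch a (m + l) = poch a m * poch (a + m) l := by
  simp only [poch, Finset.prod_range_add]
  congr 1
  refine Finset.prod_congr rfl fun j _ => ?_
  push_cast; ring

lemma poch_reflect (x : ℂ) (m : ℕ) : poch (1 - x - m) m = (-1)^m * poch x m := by
  unfold poch
  rw [← Finset.prod_range_reflect (fun j => (1 - x - (m:ℂ) + j))]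
  rw [show ((-1:ℂ))^m = ∏ _j ∈ range m, (-1:ℂ) by simp, ← Finset.prod_mul_distrib]
  refine Finset.prod_congr rfl fun j hj => ?_
  have hjm : j < m := mem_range.mp hj
  have : ((m - 1 - j : ℕ) : ℂ) = (m : ℂ) - 1 - j := by
    have h1 : m - 1 - j = m - (j + 1) := by omega
    rw [h1, Nat.cast_sub hjm]
    push_cast; ring
  rw [this]; ring

lemma poch_neg_nat (n k : ℕ) (hk : k ≤ n) :
    poch (-(n:ℂ)) k = (-1)^k * (n.choose k : ℂ) * (k.factorial : ℂ) := by
  unfold poch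
  rw [show ((-1:ℂ))^k = ∏ _j ∈ range k, (-1:ℂ) by simp]
  have : ∀ j ∈ range k, (-(n:ℂ) + j) = (-1) * ((n - j : ℕ) : ℂ) := by
    intro j hj
    have : j ≤ n := le_trans (le_of_lt (mem_range.mp hj)) hk
    rw [Nat.cast_sub this]; ring
  rw [Finset.prod_congr rfl this, Finset.prod_mul_distrib, ← Nat.cast_prod,
    ← Nat.descFactorial_eq_prod_range, Nat.descFactorial_eq_factorial_mul_choose]
  push_cast; ring

lemma tri (f : ℕ → ℕ → ℂ) : ∀ n : ℕ,
    ∑ k ∈ range (n+1), ∑ j ∈ range (n+1-k), f k j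
      = ∑ m ∈ range (n+1), ∑ k ∈ range (m+1), f k (m-k) := by
  intro n
  induction n with
  | zero => simp
  | succ n ih =>
    rw [Finset.sum_range_succ (fun k => ∑ j ∈ range (n+2-k), f k j)]
    have h1 : ∀ k ∈ range (n+1),
        ∑ j ∈ range (n+2-k), f k j = ∑ j ∈ range (n+1-k), f k j + f k (n+1-k) := by
      intro k hk
      have hkn : k ≤ n := Nat.lt_succ_iff.mp (mem_range.mp hk)
      have : n + 2 - k = (n + 1 - k) + 1 := by omega
      rw [this, Finset.sum_range_succ]
    rw [Finset.sum_congr rfl h1, Finset.sum_add_distrib, ih]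
    have h2 : n + 2 - (n+1) = 1 := by omega
    rw [h2]
    rw [Finset.sum_range_succ (fun m => ∑ k ∈ range (m+1), f k (m-k)) (n+1)]
    rw [Finset.sum_range_succ (fun k => f k (n+1-k)) (n+1)]
    simp [Nat.sub_self]
    ring
lemma vand' (x y : ℂ) : ∀ m : ℕ, poch (x + y) m
    = ∑ j ∈ range (m+1), (m.choose j : ℂ) * poch x j * poch y (m - j) := by
  intro m
  induction m with
  | zero => simp [poch]
  | succ m ih =>
    rw [poch_succ, ih, Finset.sum_mul]
    have key : ∀ j ∈ range (m+1),
        (m.choose j : ℂ) * poch x j * poch y (m - j) * (x + y + m)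
        = (m.choose j : ℂ) * poch x (j+1) * poch y (m - j)
          + (m.choose j : ℂ) * poch x j * poch y (m - j + 1) := by
      intro j hj
      have hjm : j ≤ m := by simpa using Nat.lt_succ_iff.mp (mem_range.mp hj)
      have hcast : ((m - j : ℕ) : ℂ) = (m : ℂ) - j := by
        exact Nat.cast_sub hjm
      rw [poch_succ, poch_succ, hcast]
      ring
    rw [Finset.sum_congr rfl key, Finset.sum_add_distrib]
    have h1 : ∑ j ∈ range (m+1), (m.choose j : ℂ) * poch x (j+1) * poch y (m - j)
        = ∑ j ∈ range (m+2), (m.choose (j-1) : ℂ) * poch x j * poch y (m+1-j) - poch y (m+1) := by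
      rw [Finset.sum_range_succ' (fun j => (m.choose (j-1) : ℂ) * poch x j * poch y (m+1-j))]
      simp [poch_zero]
    have h2 : ∑ j ∈ range (m+1), (m.choose j : ℂ) * poch x j * poch y (m - j + 1)
        = ∑ j ∈ range (m+2), (m.choose j : ℂ) * poch x j * poch y (m+1-j) := by
      rw [Finset.sum_range_succ (fun j => (m.choose j : ℂ) * poch x j * poch y (m+1-j))]
      have : (m.choose (m+1) : ℂ) = 0 := by simp [Nat.choose_eq_zero_of_lt]
      rw [this]
      simp only [zero_mul, add_zero]
      refine Finset.sum_congr rfl fun j hj => ?_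
      have hjm : j ≤ m := by simpa using Nat.lt_succ_iff.mp (mem_range.mp hj)
      congr 2
      omega
    rw [h1, h2]
    have h4 : ∑ j ∈ range (m+2), (m.choose (j-1) : ℂ) * poch x j * poch y (m+1-j)
          + ∑ j ∈ range (m+2), (m.choose j : ℂ) * poch x j * poch y (m+1-j)
        = ∑ j ∈ range (m+2), ((m+1).choose j : ℂ) * poch x j * poch y (m+1-j)
          + poch y (m+1) := by
      rw [← Finset.sum_add_distrib]
      rw [Finset.sum_range_succ' (fun j => (m.choose (j-1) : ℂ) * poch x j * poch y (m+1-j)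
            + (m.choose j : ℂ) * poch x j * poch y (m+1-j)),
          Finset.sum_range_succ' (fun j => ((m+1).choose j : ℂ) * poch x j * poch y (m+1-j))]
      simp only [Nat.add_sub_cancel, Nat.choose_zero_right, Nat.cast_one, poch_zero,
        Nat.zero_sub, Nat.sub_zero, one_mul, mul_one]
      have : ∀ i ∈ range (m+1),
          (m.choose i : ℂ) * poch x (i+1) * poch y (m+1-(i+1))
            + (m.choose (i+1) : ℂ) * poch x (i+1) * poch y (m+1-(i+1))
          = ((m+1).choose (i+1) : ℂ) * poch x (i+1) * poch y (m+1-(i+1)) := by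
        intro i hi
        rw [Nat.choose_succ_succ, Nat.cast_add]
        ring
      rw [Finset.sum_congr rfl (by intro i hi; exact this i hi)]
      ring
    linear_combination h4

lemma keyP (n : ℕ) (a b c : ℂ) :
    ∑ k ∈ range (n+1), (n.choose k : ℂ) * poch a k * poch b k * poch (c + k) (n-k)
        * poch (c-a-b) (n-k)
      = poch (c-a) n * poch (c-b) n := by
  set F : ℕ → ℕ → ℂ := fun k j => (n.choose k : ℂ) * ((n-k).choose j : ℂ) * poch a k
      * poch b (k+j) * poch (c-b) (n-k-j) * poch (c-a-b) (n-k) with hF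
  have hA : ∀ k ∈ range (n+1), (n.choose k : ℂ) * poch a k * poch b k * poch (c + k) (n-k)
        * poch (c-a-b) (n-k) = ∑ j ∈ range (n+1-k), F k j := by
    intro k hk
    have hkn : k ≤ n := Nat.lt_succ_iff.mp (mem_range.mp hk)
    have e1 : poch (c + k) (n-k) = poch ((b + k) + (c - b)) (n-k) := by ring_nf
    have e2 : n - k + 1 = n + 1 - k := by omega
    rw [e1, vand' (b + k) (c - b) (n-k), e2]
    simp only [Finset.mul_sum, Finset.sum_mul]
    refine Finset.sum_congr rfl fun j hj => ?_
    have : poch b k * poch (b + k) j = poch b (k + j) := (poch_add b k j).symm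
    rw [hF]
    simp only []
    rw [← this]
    ring
  rw [Finset.sum_congr rfl hA, tri F n]
  have hB : ∀ m ∈ range (n+1), ∑ k ∈ range (m+1), F k (m-k)
      = (n.choose m : ℂ) * poch b m * poch (c-a-b) (n-m) * poch (c-b) n := by
    intro m hm
    have hmn : m ≤ n := Nat.lt_succ_iff.mp (mem_range.mp hm)
    have hin : ∀ k ∈ range (m+1), F k (m-k)
        = ((n.choose m : ℂ) * poch b m * poch (c-b) (n-m) * poch (c-a-b) (n-m))
          * ((m.choose k : ℂ) * poch a k * poch (c-a-b + ((n-m : ℕ) : ℂ)) (m-k)) := by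
      intro k hk
      have hkm : k ≤ m := Nat.lt_succ_iff.mp (mem_range.mp hk)
      have e1 : k + (m - k) = m := by omega
      have e2 : n - k - (m - k) = n - m := by omega
      have e3 : n - k = (n - m) + (m - k) := by omega
      have e4 : (n.choose k : ℂ) * ((n-k).choose (m-k) : ℂ)
          = (n.choose m : ℂ) * (m.choose k : ℂ) := by
        rw [← Nat.cast_mul, ← Nat.cast_mul, Nat.choose_mul (n := n) hkm]
      rw [hF]
      simp only []
      rw [e1, e2, e4, e3, poch_add (c-a-b) (n-m) (m-k)]
      ring
    rw [Finset.sum_congr rfl hin, ← Finset.mul_sum]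
    have hv : ∑ k ∈ range (m+1), (m.choose k : ℂ) * poch a k
          * poch (c-a-b + ((n-m : ℕ) : ℂ)) (m-k)
        = poch (c - b + ((n-m : ℕ) : ℂ)) m := by
      rw [← vand' a (c-a-b + ((n-m : ℕ) : ℂ)) m]
      ring_nf
    rw [hv]
    have hcb : poch (c-b) (n-m) * poch (c - b + ((n-m : ℕ) : ℂ)) m = poch (c-b) n := by
      rw [← poch_add (c-b) (n-m) m]
      congr 1
      omega
    calc (n.choose m : ℂ) * poch b m * poch (c-b) (n-m) * poch (c-a-b) (n-m)
          * poch (c - b + ((n-m : ℕ) : ℂ)) m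
        = (n.choose m : ℂ) * poch b m * poch (c-a-b) (n-m)
          * (poch (c-b) (n-m) * poch (c - b + ((n-m : ℕ) : ℂ)) m) := by ring
      _ = (n.choose m : ℂ) * poch b m * poch (c-a-b) (n-m) * poch (c-b) n := by rw [hcb]
  rw [Finset.sum_congr rfl hB, ← Finset.sum_mul]
  have : ∑ m ∈ range (n+1), (n.choose m : ℂ) * poch b m * poch (c-a-b) (n-m)
      = poch (c-a) n := by
    rw [← vand' b (c-a-b) n]
    ring_nf
  rw [this]

/-- Saalschütz's theorem. -/
theorem saalschuetz (n : ℕ) (a b c : ℂ)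
    (hc : ∀ k ≤ n, poch c k ≠ 0)
    (hd : ∀ k ≤ n, poch (1 + a + b - c - (n : ℂ)) k ≠ 0)
    (hcn : poch c n ≠ 0) (hcabn : poch (c - a - b) n ≠ 0) :
    ∑ k ∈ Finset.range (n + 1),
        poch a k * poch b k * poch (-(n : ℂ)) k /
          (poch c k * poch (1 + a + b - c - (n : ℂ)) k * (k.factorial : ℂ))
      = poch (c - a) n * poch (c - b) n / (poch c n * poch (c - a - b) n) := by
  set d : ℂ := 1 + a + b - c - (n : ℂ) with hd'
  have hdn : poch d n = (-1)^n * poch (c-a-b) n := by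
    have h := poch_reflect (c-a-b) n
    rw [show (1:ℂ) - (c-a-b) - (n:ℂ) = d by rw [hd']; ring] at h
    exact h
  have hdn0 : poch d n ≠ 0 := by
    rw [hdn]
    exact mul_ne_zero (pow_ne_zero _ (by norm_num)) hcabn
  have hD : poch c n * poch d n ≠ 0 := mul_ne_zero hcn hdn0
  apply mul_right_cancel₀ hD
  rw [Finset.sum_mul]
  have hterm : ∀ k ∈ range (n+1),
      poch a k * poch b k * poch (-(n : ℂ)) k / (poch c k * poch d k * (k.factorial : ℂ))
          * (poch c n * poch d n)
      = (-1)^n * ((n.choose k : ℂ) * poch a k * poch b k * poch (c + k) (n-k)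
          * poch (c-a-b) (n-k)) := by
    intro k hk
    have hkn : k ≤ n := Nat.lt_succ_iff.mp (mem_range.mp hk)
    have hsplitc : poch c n = poch c k * poch (c + k) (n-k) := by
      rw [← poch_add]; congr 1; omega
    have hsplitd : poch d n = poch d k * poch (d + k) (n-k) := by
      rw [← poch_add]; congr 1; omega
    have hrefl : poch (d + k) (n-k) = (-1)^(n-k) * poch (c-a-b) (n-k) := by
      have h := poch_reflect (c-a-b) (n-k)
      rw [show (1:ℂ) - (c-a-b) - ((n-k : ℕ) : ℂ) = d + k by
        rw [hd', Nat.cast_sub hkn]; ring] at h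
      exact h
    have hsign : ((-1:ℂ))^k * (-1)^(n-k) = (-1)^n := by
      rw [← pow_add]; congr 1; omega
    have hp : poch (-(n:ℂ)) k = (-1)^k * (n.choose k : ℂ) * (k.factorial : ℂ) :=
      poch_neg_nat n k hkn
    have hck : poch c k ≠ 0 := hc k hkn
    have hdk : poch d k ≠ 0 := hd k hkn
    have hfk : (k.factorial : ℂ) ≠ 0 := Nat.cast_ne_zero.mpr k.factorial_ne_zero
    rw [hsplitc, hsplitd, hp, hrefl]
    field_simp
    linear_combination (poch a k * poch b k * (n.choose k : ℂ) * poch (c + k) (n-k)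
      * poch (c-a-b) (n-k)) * hsign
  rw [Finset.sum_congr rfl hterm, ← Finset.mul_sum, keyP n a b c, hdn]
  field_simp
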